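/- arXiv:1506.01810 — 4 statements merged into one kernel-verified Lean document; each statement's English description precedes it below -/
import Mathlib

section
/- Suppose a, b : ℝ → ℝ satisfy the Lipschitz condition (A1) and condition (A4) with exponent p ≥ 0, and set d(x) = a(x)²/b(x)². Then there exists a constant C > 0 such that for all x, y ∈ ℝ, |d(x) - d(y)| ≤ C|x - y| · (1 + |x|^{2p+1} + (1 + |x|^p)(1 + |y|^{p+1}) + (1 + |x|^{2p+1})(1 + |y|^{p+1}) + (1 + |x|^{p+1})(1 + |y|^{2p+1})). -/
/-!
Put `f = a / b`. By (A1) and (A4), `|f x| ≲ 1 + |x| ^ (p + 1)` and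
`|f x - f y| ≲ |x - y| (1 + |x| ^ p) (1 + |f y|)`; the bound follows from
`f x ^ 2 - f y ^ 2 = (f x - f y) f x + (f x - f y) f y` and
`(1 + t ^ q) (1 + t ^ r) ≤ 2 (1 + t ^ (q + r))`.

Since `|0|⁻¹ = 0` in Lean, (A4) alone allows `b` to vanish. It does force `|b|` to stay away from
`0` near every point where `b ≠ 0`, so by connectedness `b` vanishes either nowhere or everywhere,
and in the second case `d = 0`.
-/

open Set

theorem forall_eq_zero_or_forall_ne_zero_of_inv_norm_le {X E : Type*} [TopologicalSpace X]
    [PreconnectedSpace X] [NormedAddCommGroup E] {b : X → E} {w : X → ℝ}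
    (hb : Continuous b) (hw : Continuous w) (h : ∀ x, ‖b x‖⁻¹ ≤ w x) :
    (∀ x, b x = 0) ∨ ∀ x, b x ≠ 0 := by
  -- the inverse bound makes `{b ≠ 0}` a closed superlevel set, besides being open
  have hset : {x | b x ≠ 0} = {x | 1 ≤ ‖b x‖ * w x} := by
    ext x
    refine ⟨fun hx => (inv_le_iff_one_le_mul₀' (norm_pos_iff.2 hx)).1 (h x), fun hx hx0 => ?_⟩
    rw [mem_ofPred_eq, hx0, norm_zero, zero_mul] at hx
    exact one_pos.not_ge hx
  have hclopen : IsClopen {x | b x ≠ 0} :=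
    ⟨hset ▸ isClosed_le continuous_const (hb.norm.mul hw), isOpen_ne_fun hb continuous_const⟩
  rcases isClopen_iff.1 hclopen with hempty | huniv
  · exact .inl fun x => not_not.1 fun hx => (hempty ▸ hx : x ∈ (∅ : Set X))
  · exact .inr fun x => (huniv.symm ▸ mem_univ x : x ∈ {x | b x ≠ 0})

theorem norm_div_sub_div_le {𝕜 : Type*} [NormedField 𝕜] {a₁ a₂ b₁ b₂ : 𝕜}
    (h₁ : b₁ ≠ 0) (h₂ : b₂ ≠ 0) :
    ‖a₁ / b₁ - a₂ / b₂‖ ≤ ‖b₁‖⁻¹ * (1 + ‖a₂ / b₂‖) * (‖a₁ - a₂‖ + ‖b₁ - b₂‖) := by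
  have hid : a₁ / b₁ - a₂ / b₂ = (a₁ - a₂ - a₂ / b₂ * (b₁ - b₂)) / b₁ := by
    field_simp
    ring
  have hnum : ‖a₁ - a₂ - a₂ / b₂ * (b₁ - b₂)‖ ≤ (1 + ‖a₂ / b₂‖) * (‖a₁ - a₂‖ + ‖b₁ - b₂‖) := by
    calc _ ≤ ‖a₁ - a₂‖ + ‖a₂ / b₂‖ * ‖b₁ - b₂‖ := (norm_sub_le _ _).trans_eq (by rw [norm_mul])
      _ ≤ _ := by nlinarith [norm_nonneg (a₁ - a₂), norm_nonneg (a₂ / b₂), norm_nonneg (b₁ - b₂)]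
  rw [hid, norm_div, div_eq_inv_mul, mul_assoc]
  gcongr

theorem norm_sq_sub_sq_le {𝕜 : Type*} [NormedField 𝕜] (u v : 𝕜) :
    ‖u ^ 2 - v ^ 2‖ ≤ ‖u - v‖ * ‖u‖ + ‖v - u‖ * ‖v‖ := by
  rw [sq_sub_sq, norm_mul, norm_sub_rev v u, ← mul_add, mul_comm]
  gcongr
  exact norm_add_le _ _

theorem one_add_rpow_mul_one_add_rpow_le {t q r : ℝ} (ht : 0 ≤ t) (hq : 0 ≤ q) (hr : 0 ≤ r) :
    (1 + t ^ q) * (1 + t ^ r) ≤ 2 * (1 + t ^ (q + r)) := by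
  have hsign : 0 ≤ (1 - t ^ q) * (1 - t ^ r) := by
    rcases le_total t 1 with h | h
    · exact mul_nonneg (sub_nonneg.2 (Real.rpow_le_one ht h hq))
        (sub_nonneg.2 (Real.rpow_le_one ht h hr))
    · exact mul_nonneg_of_nonpos_of_nonpos (sub_nonpos.2 (Real.one_le_rpow h hq))
        (sub_nonpos.2 (Real.one_le_rpow h hr))
  rw [Real.rpow_add_of_nonneg ht hq hr]
  linarith

section

variable {a b : ℝ → ℝ} {L K p : ℝ}

theorem abs_div_le_of_lipschitz_of_inv_abs_le (hL : 0 ≤ L) (hK : 0 ≤ K) (hp : 0 ≤ p)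
    (ha : ∀ x y, |a x - a y| ≤ L * |x - y|) (hb : ∀ x, |b x|⁻¹ ≤ K * (1 + |x| ^ p)) (x : ℝ) :
    |a x / b x| ≤ 2 * ((|a 0| + L) * K) * (1 + |x| ^ (p + 1)) := by
  have hax : |a x| ≤ (|a 0| + L) * (1 + |x|) := by
    have h := (abs_sub_abs_le_abs_sub (a x) (a 0)).trans (ha x 0)
    rw [sub_zero] at h
    nlinarith [abs_nonneg (a 0), abs_nonneg x]
  calc |a x / b x| = |a x| * |b x|⁻¹ := by rw [abs_div, div_eq_mul_inv]
    _ ≤ (|a 0| + L) * (1 + |x| ^ (1 : ℝ)) * (K * (1 + |x| ^ p)) := by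
      rw [Real.rpow_one]
      exact mul_le_mul hax (hb x) (by positivity) (by positivity)
    _ = (|a 0| + L) * K * ((1 + |x| ^ (1 : ℝ)) * (1 + |x| ^ p)) := by ring
    _ ≤ (|a 0| + L) * K * (2 * (1 + |x| ^ (1 + p))) :=
      mul_le_mul_of_nonneg_left
        (one_add_rpow_mul_one_add_rpow_le (abs_nonneg x) zero_le_one hp) (by positivity)
    _ = _ := by rw [add_comm 1 p]; ring

theorem abs_div_sub_div_le_of_lipschitz_of_inv_abs_le
    (hlip : ∀ x y, |a x - a y| + |b x - b y| ≤ L * |x - y|)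
    (hb : ∀ x, |b x|⁻¹ ≤ K * (1 + |x| ^ p)) (hb0 : ∀ x, b x ≠ 0) (x y : ℝ) :
    |a x / b x - a y / b y| ≤ L * K * |x - y| * (1 + |x| ^ p) * (1 + |a y / b y|) := by
  calc |a x / b x - a y / b y|
      ≤ |b x|⁻¹ * (1 + |a y / b y|) * (|a x - a y| + |b x - b y|) :=
        norm_div_sub_div_le (hb0 x) (hb0 y)
    _ ≤ K * (1 + |x| ^ p) * (1 + |a y / b y|) * (L * |x - y|) := by
      have hKx : 0 ≤ K * (1 + |x| ^ p) := (inv_nonneg.2 (abs_nonneg _)).trans (hb x)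
      gcongr
      exacts [hb x, hlip x y]
    _ = _ := by ring

end

theorem abs_sq_sub_sq_le_of_growth {f : ℝ → ℝ} {M N p : ℝ} (hM : 0 ≤ M) (hN : 0 ≤ N)
    (hp : 0 ≤ p) (hgrowth : ∀ x, |f x| ≤ M * (1 + |x| ^ (p + 1)))
    (hdiff : ∀ x y, |f x - f y| ≤ N * |x - y| * (1 + |x| ^ p) * (1 + |f y|)) (x y : ℝ) :
    |f x ^ 2 - f y ^ 2| ≤ 2 * N * M * (1 + M) * |x - y| *
      ((1 + |x| ^ (2 * p + 1)) * (1 + |y| ^ (p + 1))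
        + (1 + |x| ^ (p + 1)) * (1 + |y| ^ (2 * p + 1))) := by
  have half : ∀ x y, |f x - f y| * |f x| ≤
      2 * N * M * (1 + M) * |x - y| * ((1 + |x| ^ (2 * p + 1)) * (1 + |y| ^ (p + 1))) := by
    intro x y
    have hfy : 1 + |f y| ≤ (1 + M) * (1 + |y| ^ (p + 1)) := by
      have : 0 ≤ |y| ^ (p + 1) := by positivity
      nlinarith [hgrowth y]
    have hweight : (1 + |x| ^ p) * (1 + |x| ^ (p + 1)) ≤ 2 * (1 + |x| ^ (2 * p + 1)) := by
      rw [show 2 * p + 1 = p + (p + 1) by ring]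
      exact one_add_rpow_mul_one_add_rpow_le (abs_nonneg x) hp (by linarith)
    calc |f x - f y| * |f x|
        ≤ N * |x - y| * (1 + |x| ^ p) * ((1 + M) * (1 + |y| ^ (p + 1)))
            * (M * (1 + |x| ^ (p + 1))) := by
          gcongr
          · exact (hdiff x y).trans (by gcongr)
          · exact hgrowth x
      _ = N * M * (1 + M) * |x - y| * ((1 + |x| ^ p) * (1 + |x| ^ (p + 1)))
            * (1 + |y| ^ (p + 1)) := by ring
      _ ≤ N * M * (1 + M) * |x - y| * (2 * (1 + |x| ^ (2 * p + 1)))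
            * (1 + |y| ^ (p + 1)) := by gcongr
      _ = _ := by ring
  calc |f x ^ 2 - f y ^ 2| ≤ |f x - f y| * |f x| + |f y - f x| * |f y| :=
        norm_sq_sub_sq_le (f x) (f y)
    _ ≤ 2 * N * M * (1 + M) * |x - y| * ((1 + |x| ^ (2 * p + 1)) * (1 + |y| ^ (p + 1)))
          + 2 * N * M * (1 + M) * |y - x| * ((1 + |y| ^ (2 * p + 1)) * (1 + |x| ^ (p + 1))) :=
        add_le_add (half x y) (half y x)
    _ = _ := by rw [abs_sub_comm y x]; ring

/-- Under the Lipschitz condition (A1) and condition (A4) with exponent `p ≥ 0`,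
the function `d(x) = a(x)²/b(x)²` satisfies the locally-Lipschitz-type estimate
used in the proof of Lemma 4 of the paper. -/
theorem d_lipschitz_type_bound (a b : ℝ → ℝ) (L : ℝ) (hL : 0 < L)
    (hlip : ∀ x y : ℝ, |a x - a y| + |b x - b y| ≤ L * |x - y|)
    (K p : ℝ) (hK : 0 < K) (hp : 0 ≤ p)
    (hb : ∀ x : ℝ, |b x|⁻¹ ≤ K * (1 + |x| ^ p)) :
    ∃ C > 0, ∀ x y : ℝ,
      |(a x) ^ 2 / (b x) ^ 2 - (a y) ^ 2 / (b y) ^ 2| ≤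
        C * |x - y| * (1 + |x| ^ (2 * p + 1)
          + (1 + |x| ^ p) * (1 + |y| ^ (p + 1))
          + (1 + |x| ^ (2 * p + 1)) * (1 + |y| ^ (p + 1))
          + (1 + |x| ^ (p + 1)) * (1 + |y| ^ (2 * p + 1))) := by
  have ha : ∀ x y, |a x - a y| ≤ L * |x - y| := fun x y =>
    (le_add_of_nonneg_right (abs_nonneg _)).trans (hlip x y)
  have hb_lip : LipschitzWith L.toNNReal b := LipschitzWith.of_dist_le' fun x y =>
    (le_add_of_nonneg_left (abs_nonneg _)).trans (hlip x y)
  have hweight : Continuous fun x : ℝ => K * (1 + |x| ^ p) := by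
    have := Real.continuous_rpow_const hp
    fun_prop
  set M := 2 * ((|a 0| + L) * K)
  refine ⟨2 * (L * K) * M * (1 + M), by positivity, fun x y => ?_⟩
  rcases forall_eq_zero_or_forall_ne_zero_of_inv_norm_le hb_lip.continuous hweight hb with
    hzero | hne
  · simp only [hzero, ne_eq, OfNat.ofNat_ne_zero, not_false_eq_true, zero_pow, div_zero,
      sub_self, abs_zero]
    positivity
  have hbound := abs_sq_sub_sq_le_of_growth (by positivity) (by positivity) hp
    (abs_div_le_of_lipschitz_of_inv_abs_le hL.le hK.le hp ha hb)
    (abs_div_sub_div_le_of_lipschitz_of_inv_abs_le hlip hb hne) x y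
  rw [div_pow, div_pow] at hbound
  refine hbound.trans ?_
  gcongr
  have : 0 ≤ 1 + |x| ^ (2 * p + 1) + (1 + |x| ^ p) * (1 + |y| ^ (p + 1)) := by positivity
  linarith
end

section
/- Let θ > 0 and suppose a, b : ℝ → ℝ satisfy the Lipschitz condition (A1) and condition (A4), and that condition (A0) holds: limsup_{|x|→∞} c(x)·sgn(x) < 0. Then Φ_θ(x) → +∞ as x → +∞ and Φ_θ(x) → -∞ as x → -∞, i.e. the recurrence condition (A2) is satisfied. -/
open MeasureTheory Filter

/-- For `θ > 0`, under (A1), (A4) and condition (A0), the recurrence condition (A2)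
holds: `Φ_θ(x) → +∞` as `x → +∞` and `Φ_θ(x) → -∞` as `x → -∞`, where
`Φ_θ(x) = ∫_0^x φ_θ(y) dy` and `φ_θ(y) = exp(-2θ ∫_0^y c(z) dz)`, `c = a/b²`. -/
theorem recurrence_condition (a b : ℝ → ℝ) (θ : ℝ) (hθ : 0 < θ) (L : ℝ) (hL : 0 < L)
    (hlip : ∀ x y : ℝ, |a x - a y| + |b x - b y| ≤ L * |x - y|)
    (K p : ℝ) (hK : 0 < K) (hp : 0 ≤ p)
    (hb : ∀ x : ℝ, |b x|⁻¹ ≤ K * (1 + |x| ^ p))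
    (hA0 : ∃ ε > (0:ℝ), ∃ R > (0:ℝ),
      (∀ x : ℝ, R ≤ x → a x / (b x) ^ 2 ≤ -ε) ∧
      (∀ x : ℝ, x ≤ -R → ε ≤ a x / (b x) ^ 2))
    (φ : ℝ → ℝ)
    (hφ : ∀ x : ℝ, φ x = Real.exp (-2 * θ * ∫ y in (0:ℝ)..x, a y / (b y) ^ 2))
    (Φ : ℝ → ℝ)
    (hΦ : ∀ x : ℝ, Φ x = ∫ y in (0:ℝ)..x, φ y) :
    Tendsto Φ atTop atTop ∧ Tendsto Φ atBot atBot := by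
  obtain ⟨ε, hε, R, hR, hA0p, hA0m⟩ := hA0
  -- continuity of a and b
  have ha : Continuous a := by
    apply (LipschitzWith.of_dist_le_mul (K := ⟨L, hL.le⟩) ?_).continuous
    intro x y
    simp only [Real.dist_eq, NNReal.coe_mk]
    calc |a x - a y| ≤ |a x - a y| + |b x - b y| := le_add_of_nonneg_right (abs_nonneg _)
      _ ≤ L * |x - y| := hlip x y
  have hbc : Continuous b := by
    apply (LipschitzWith.of_dist_le_mul (K := ⟨L, hL.le⟩) ?_).continuous
    intro x y
    simp only [Real.dist_eq, NNReal.coe_mk]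
    calc |b x - b y| ≤ |a x - a y| + |b x - b y| := le_add_of_nonneg_left (abs_nonneg _)
      _ ≤ L * |x - y| := hlip x y
  -- b is nowhere zero
  have hbR : b R ≠ 0 := by
    intro h
    have := hA0p R le_rfl
    rw [h] at this
    simp at this
    linarith
  have hbne : ∀ x : ℝ, b x ≠ 0 := by
    intro x₀ h0
    set B : ℝ := max |x₀| |R| with hB
    set δ : ℝ := (K * (1 + B ^ p))⁻¹ with hδ
    have hBnn : 0 ≤ B := le_max_of_le_left (abs_nonneg _)
    have hδpos : 0 < δ := by
      apply inv_pos.2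
      apply mul_pos hK
      positivity
    have hbig : ∀ x ∈ Set.uIcc x₀ R, b x ≠ 0 → δ ≤ |b x| := by
      intro x hx hne
      have hxB : |x| ≤ B := by
        rcases Set.mem_uIcc.1 hx with ⟨h1, h2⟩ | ⟨h1, h2⟩
        · exact abs_le_max_abs_abs h1 h2
        · exact (abs_le_max_abs_abs h1 h2).trans (le_of_eq (max_comm _ _))
      have hpow : |x| ^ p ≤ B ^ p := Real.rpow_le_rpow (abs_nonneg x) hxB hp
      have h1 : |b x|⁻¹ ≤ δ⁻¹ := by
        rw [hδ, inv_inv]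
        exact (hb x).trans (by nlinarith)
      have hbxpos : 0 < |b x| := abs_pos.2 hne
      rw [inv_le_inv₀ hbxpos hδpos] at h1  -- careful: direction
      exact h1
    -- IVT on |b|
    have hcont : ContinuousOn (fun x => |b x|) (Set.uIcc x₀ R) := (hbc.abs).continuousOn
    have hmem : δ / 2 ∈ Set.uIcc (|b x₀|) (|b R|) := by
      rw [h0, abs_zero]
      rcases hbig R Set.right_mem_uIcc hbR with h
      exact Set.mem_uIcc.2 (Or.inl ⟨by linarith, by linarith⟩)
    obtain ⟨x, hxmem, hxval⟩ := intermediate_value_uIcc hcont hmem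
    have hxval' : |b x| = δ / 2 := hxval
    have hxne : b x ≠ 0 := by
      intro h
      rw [h, abs_zero] at hxval'
      linarith
    have := hbig x hxmem hxne
    rw [hxval'] at this
    linarith
  -- c continuous
  set c : ℝ → ℝ := fun x => a x / (b x) ^ 2 with hc
  have hccont : Continuous c := ha.div (hbc.pow 2) (fun x => pow_ne_zero 2 (hbne x))
  have hcint : ∀ u v : ℝ, IntervalIntegrable c volume u v :=
    fun u v => hccont.intervalIntegrable u v
  have hIcont : Continuous fun x => ∫ y in (0:ℝ)..x, c y :=
    intervalIntegral.continuous_primitive hcint 0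
  have hφcont : Continuous φ := by
    have : Continuous fun x => Real.exp (-2 * θ * ∫ y in (0:ℝ)..x, c y) :=
      ((continuous_const.mul hIcont)).rexp
    convert this using 1
    funext x
    rw [hφ x]
  have hφpos : ∀ x, 0 < φ x := fun x => (hφ x) ▸ Real.exp_pos _
  have hφint : ∀ u v : ℝ, IntervalIntegrable φ volume u v :=
    fun u v => hφcont.intervalIntegrable u v
  set I : ℝ → ℝ := fun x => ∫ y in (0:ℝ)..x, c y with hI
  -- For x ≥ R, φ x ≥ φ R
  have hkey : ∀ x : ℝ, R ≤ x → φ R ≤ φ x := by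
    intro x hx
    have hsplit : I x = I R + ∫ y in R..x, c y :=
      (intervalIntegral.integral_add_adjacent_intervals (hcint 0 R) (hcint R x)).symm
    have hnonpos : (∫ y in R..x, c y) ≤ 0 := by
      have := intervalIntegral.integral_mono_on hx (hcint R x)
        (intervalIntegrable_const (c := (0:ℝ)))
        (fun u hu => by have := hA0p u hu.1; simp only [hc]; linarith)
      simpa using this
    have hIle : I x ≤ I R := by rw [hsplit]; linarith
    rw [hφ x, hφ R]
    apply Real.exp_le_exp.2
    nlinarith
  have hkey' : ∀ x : ℝ, x ≤ -R → φ (-R) ≤ φ x := by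
    intro x hx
    have hsplit : I (-R) = I x + ∫ y in x..(-R), c y :=
      (intervalIntegral.integral_add_adjacent_intervals (hcint 0 x) (hcint x (-R))).symm
    have hnonneg : 0 ≤ (∫ y in x..(-R), c y) := by
      apply intervalIntegral.integral_nonneg hx
      intro u hu
      have := hA0m u hu.2
      linarith
    have hIle : I x ≤ I (-R) := by rw [hsplit]; linarith
    rw [hφ x, hφ (-R)]
    apply Real.exp_le_exp.2
    nlinarith
  constructor
  · -- atTop
    have hlow : ∀ x : ℝ, R ≤ x → Φ R + φ R * (x - R) ≤ Φ x := by
      intro x hx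
      have hsplit : Φ x = Φ R + ∫ y in R..x, φ y := by
        rw [hΦ x, hΦ R]
        exact (intervalIntegral.integral_add_adjacent_intervals (hφint 0 R) (hφint R x)).symm
      have hbound : φ R * (x - R) ≤ ∫ y in R..x, φ y := by
        have := intervalIntegral.integral_mono_on hx
          (intervalIntegrable_const (c := φ R)) (hφint R x)
          (fun u hu => hkey u hu.1)
        rw [intervalIntegral.integral_const, smul_eq_mul, mul_comm] at this
        exact this
      rw [hsplit]; linarith
    apply tendsto_atTop_mono' _ _ (tendsto_atTop_add_const_left _ (Φ R)
      ((tendsto_atTop_add_const_right _ (-R) tendsto_id).const_mul_atTop (hφpos R)))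
    filter_upwards [eventually_ge_atTop R] with x hx
    have := hlow x hx
    simpa [sub_eq_add_neg] using this
  · -- atBot
    have hup : ∀ x : ℝ, x ≤ -R → Φ x ≤ Φ (-R) + φ (-R) * (x + R) := by
      intro x hx
      have hsplit : Φ (-R) = Φ x + ∫ y in x..(-R), φ y := by
        rw [hΦ x, hΦ (-R)]
        exact (intervalIntegral.integral_add_adjacent_intervals (hφint 0 x) (hφint x (-R))).symm
      have hbound : φ (-R) * (-R - x) ≤ ∫ y in x..(-R), φ y := by
        have := intervalIntegral.integral_mono_on hx
          (intervalIntegrable_const (c := φ (-R))) (hφint x (-R))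
          (fun u hu => hkey' u hu.2)
        rw [intervalIntegral.integral_const, smul_eq_mul, mul_comm] at this
        exact this
      nlinarith [hsplit]
    apply tendsto_atBot_mono' _ _ (tendsto_atBot_add_const_left _ (Φ (-R))
      ((tendsto_atBot_add_const_right _ R tendsto_id).const_mul_atBot (hφpos (-R))))
    filter_upwards [eventually_le_atBot (-R)] with x hx
    exact hup x hx
end

section
/- Let θ > 0 and suppose a, b : ℝ → ℝ satisfy the Lipschitz condition (A1) and condition (A4), and that condition (A0) holds: limsup_{|x|→∞} c(x)·sgn(x) < 0. Then G_θ = ∫_{-∞}^{+∞} dx/(b(x)² φ_θ(x)) < ∞, i.e. the positive recurrence condition (A3) is satisfied. -/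
/-!
Since `c ≤ -ε` on `[R, ∞)` and `c ≥ ε` on `(-∞, -R]`, the primitive `∫₀ˣ c` is at most
`C - ε |x|`, so `1 / φ_θ = exp (2θ ∫₀ˣ c)` decays like `exp (-2θε |x|)`. By (A4) the factor
`b⁻²` grows only polynomially, which is `o (exp (δ |x|))` for every `δ > 0`; hence the integrand
is continuous and `O (exp (-θε |x|))` at infinity, and so integrable.
-/

open MeasureTheory Real Filter Asymptotics

lemma forall_ne_zero_of_inv_abs_le {b M : ℝ → ℝ} (hb : Continuous b) (hM : Continuous M)
    (hbM : ∀ x, |b x|⁻¹ ≤ M x) {x₀ : ℝ} (hx₀ : b x₀ ≠ 0) (x : ℝ) : b x ≠ 0 := by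
  -- `hbM` is void at zeros of `b` (as `0⁻¹ = 0`), but elsewhere forces `|b| * M ≥ 1`,
  -- so the zero set is open as well as closed.
  have hzero : {x | b x = 0} = {x | |b x| * M x < 1} := by
    ext x
    refine ⟨fun hx => by simp [show b x = 0 from hx], fun hx => ?_⟩
    by_contra hx0
    exact (not_le.2 hx) ((inv_le_iff_one_le_mul₀' (abs_pos.2 hx0)).1 (hbM x))
  have hclopen : IsClopen {x | b x = 0} :=
    ⟨isClosed_eq hb continuous_const,
      hzero ▸ isOpen_lt ((continuous_abs.comp hb).mul hM) continuous_const⟩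
  rcases isClopen_iff.1 hclopen with h | h
  · exact fun hx => (h ▸ hx : x ∈ (∅ : Set ℝ))
  · exact absurd (h ▸ Set.mem_univ x₀ : x₀ ∈ {x | b x = 0}) hx₀

lemma integral_le_sub_of_le_neg {c : ℝ → ℝ} (hc : Continuous c) {ε R x : ℝ}
    (hcR : ∀ y ≥ R, c y ≤ -ε) (hx : R ≤ x) :
    ∫ y in 0..x, c y ≤ (∫ y in 0..R, c y) - ε * (x - R) := by
  have hRx : ∫ y in R..x, c y ≤ ∫ _ in R..x, -ε :=
    intervalIntegral.integral_mono_on hx (hc.intervalIntegrable R x) intervalIntegrable_const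
      fun y hy => hcR y hy.1
  rw [← intervalIntegral.integral_add_adjacent_intervals (hc.intervalIntegrable 0 R)
    (hc.intervalIntegrable R x)]
  rw [intervalIntegral.integral_const, smul_eq_mul] at hRx
  linarith

lemma integral_le_sub_of_le {c : ℝ → ℝ} (hc : Continuous c) {ε R x : ℝ}
    (hcR : ∀ y ≤ R, ε ≤ c y) (hx : x ≤ R) :
    ∫ y in 0..x, c y ≤ (∫ y in 0..R, c y) - ε * (R - x) := by
  have hxR : ∫ _ in x..R, ε ≤ ∫ y in x..R, c y :=
    intervalIntegral.integral_mono_on hx intervalIntegrable_const (hc.intervalIntegrable x R)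
      fun y hy => hcR y hy.2
  rw [← intervalIntegral.integral_add_adjacent_intervals (hc.intervalIntegrable 0 R)
    (hc.intervalIntegrable R x), intervalIntegral.integral_symm x R]
  rw [intervalIntegral.integral_const, smul_eq_mul] at hxR
  linarith

lemma exp_integral_isBigO_cocompact {c : ℝ → ℝ} (hc : Continuous c) {ε R : ℝ}
    (hc_top : ∀ x ≥ R, c x ≤ -ε) (hc_bot : ∀ x ≤ -R, ε ≤ c x) :
    (fun x => exp (∫ y in 0..x, c y)) =O[cocompact ℝ] fun x => exp (-ε * |x|) := by
  rw [cocompact_eq_atBot_atTop, isBigO_sup]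
  constructor
  · refine IsBigO.of_bound (exp ((∫ y in 0..-R, c y) + ε * R)) ?_
    filter_upwards [eventually_le_atBot (-R), eventually_le_atBot 0] with x hxR hx0
    rw [norm_of_nonneg (exp_pos _).le, norm_of_nonneg (exp_pos _).le, ← exp_add,
      abs_of_nonpos hx0, exp_le_exp]
    linarith [integral_le_sub_of_le hc hc_bot hxR]
  · refine IsBigO.of_bound (exp ((∫ y in 0..R, c y) + ε * R)) ?_
    filter_upwards [eventually_ge_atTop R, eventually_ge_atTop 0] with x hxR hx0
    rw [norm_of_nonneg (exp_pos _).le, norm_of_nonneg (exp_pos _).le, ← exp_add,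
      abs_of_nonneg hx0, exp_le_exp]
    linarith [integral_le_sub_of_le_neg hc hc_top hxR]

lemma one_add_abs_rpow_isLittleO_exp (p : ℝ) {δ : ℝ} (hδ : 0 < δ) :
    (fun x : ℝ => 1 + |x| ^ p) =o[cocompact ℝ] fun x => exp (δ * |x|) := by
  have h : (fun t : ℝ => 1 + t ^ p) =o[atTop] fun t => exp (δ * t) := by
    simpa using (isLittleO_rpow_exp_pos_mul_atTop 0 hδ).add (isLittleO_rpow_exp_pos_mul_atTop p hδ)
  rw [cocompact_eq_atBot_atTop, ← comap_abs_atTop]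
  exact h.comp_tendsto tendsto_comap

lemma integrable_exp_neg_mul_abs {γ : ℝ} (hγ : 0 < γ) :
    Integrable fun x : ℝ => exp (-γ * |x|) := by
  rw [← integrableOn_univ, ← Set.Iic_union_Ioi (a := 0), integrableOn_union]
  constructor
  · exact (integrableOn_exp_mul_Iic hγ 0).congr_fun
      (fun x hx => by simp [abs_of_nonpos (Set.mem_Iic.1 hx)]) measurableSet_Iic
  · exact (exp_neg_integrableOn_Ioi 0 hγ).congr_fun
      (fun x hx => by simp [abs_of_pos (Set.mem_Ioi.1 hx)]) measurableSet_Ioi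

theorem integrable_inv_sq_mul_exp_integral {b c : ℝ → ℝ} {K p ε R : ℝ} (hb : Continuous b)
    (hb0 : ∀ x, b x ≠ 0) (hbK : ∀ x, |b x|⁻¹ ≤ K * (1 + |x| ^ p)) (hc : Continuous c)
    (hε : 0 < ε) (hc_top : ∀ x ≥ R, c x ≤ -ε) (hc_bot : ∀ x ≤ -R, ε ≤ c x) :
    Integrable fun x => |b x|⁻¹ ^ 2 * exp (∫ y in 0..x, c y) := by
  have hcont : Continuous fun x => |b x|⁻¹ ^ 2 * exp (∫ y in 0..x, c y) :=
    (((continuous_abs.comp hb).inv₀ fun x => abs_ne_zero.2 (hb0 x)).pow 2).mul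
      (continuous_exp.comp (intervalIntegral.continuous_primitive hc.intervalIntegrable 0))
  have hb_O : (fun x => |b x|⁻¹) =O[cocompact ℝ] fun x => exp (ε / 4 * |x|) := by
    refine (IsBigO.of_bound K (Eventually.of_forall fun x => ?_)).trans_isLittleO
      (one_add_abs_rpow_isLittleO_exp p (by positivity)) |>.isBigO
    rw [norm_of_nonneg (inv_nonneg.2 (abs_nonneg _)), norm_of_nonneg (by positivity)]
    exact hbK x
  have hO : (fun x => |b x|⁻¹ ^ 2 * exp (∫ y in 0..x, c y)) =O[cocompact ℝ]
      fun x => exp (-(ε / 2) * |x|) := by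
    refine ((hb_O.pow 2).mul (exp_integral_isBigO_cocompact hc hc_top hc_bot)).congr_right
      fun x => ?_
    rw [← exp_nat_mul, ← exp_add]
    ring_nf
  exact hcont.locallyIntegrable.integrable_of_isBigO_cocompact hO
    ((integrable_exp_neg_mul_abs (by positivity)).integrableAtFilter _)

theorem positive_recurrence_condition_general (a b : ℝ → ℝ) (θ : ℝ) (hθ : 0 < θ) (L : ℝ)
    (hlip : ∀ x y : ℝ, |a x - a y| + |b x - b y| ≤ L * |x - y|)
    (K p : ℝ) (hp : 0 ≤ p)
    (hb : ∀ x : ℝ, |b x|⁻¹ ≤ K * (1 + |x| ^ p))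
    (hA0 : ∃ ε > (0:ℝ), ∃ R > (0:ℝ),
      (∀ x : ℝ, R ≤ x → a x / (b x) ^ 2 ≤ -ε) ∧
      (∀ x : ℝ, x ≤ -R → ε ≤ a x / (b x) ^ 2))
    (φ : ℝ → ℝ)
    (hφ : ∀ x : ℝ, φ x = Real.exp (-2 * θ * ∫ y in (0:ℝ)..x, a y / (b y) ^ 2)) :
    (∫⁻ x : ℝ, ENNReal.ofReal (1 / ((b x) ^ 2 * φ x))) < ⊤ := by
  obtain ⟨ε, hε, R, -, hc_top, hc_bot⟩ := hA0
  have ha_cont : Continuous a := (LipschitzWith.of_dist_le' fun x y =>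
    (le_add_of_nonneg_right (abs_nonneg _)).trans (hlip x y)).continuous
  have hb_cont : Continuous b := (LipschitzWith.of_dist_le' fun x y =>
    (le_add_of_nonneg_left (abs_nonneg _)).trans (hlip x y)).continuous
  -- at a zero of `b` the quotient `a / b ^ 2` is `0`, which (A0) excludes at `R`
  have hbR : b R ≠ 0 := fun h => by
    linarith [hc_top R le_rfl, show a R / b R ^ 2 = 0 by simp [h]]
  have hb0 : ∀ x, b x ≠ 0 := forall_ne_zero_of_inv_abs_le hb_cont
    (continuous_const.mul (continuous_const.add ((continuous_rpow_const hp).comp continuous_abs)))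
    hb hbR
  have hc : Continuous fun x => 2 * θ * (a x / b x ^ 2) :=
    continuous_const.mul (ha_cont.div (hb_cont.pow 2) fun x => pow_ne_zero 2 (hb0 x))
  have hint := integrable_inv_sq_mul_exp_integral hb_cont hb0 hb hc (ε := 2 * θ * ε)
    (by positivity) (fun x hx => by nlinarith [hc_top x hx])
    fun x hx => by nlinarith [hc_bot x hx]
  refine (hint.congr (ae_of_all _ fun x => ?_)).lintegral_lt_top
  dsimp only
  rw [hφ, intervalIntegral.integral_const_mul, inv_pow, sq_abs, one_div, mul_inv, ← exp_neg]
  ring_nf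

/-- For `θ > 0`, under (A1), (A4) and condition (A0), the positive recurrence
condition (A3) holds: `G_θ = ∫_{-∞}^{+∞} dx/(b(x)² φ_θ(x)) < ∞`. -/
theorem positive_recurrence_condition (a b : ℝ → ℝ) (θ : ℝ) (hθ : 0 < θ) (L : ℝ) (hL : 0 < L)
    (hlip : ∀ x y : ℝ, |a x - a y| + |b x - b y| ≤ L * |x - y|)
    (K p : ℝ) (hK : 0 < K) (hp : 0 ≤ p)
    (hb : ∀ x : ℝ, |b x|⁻¹ ≤ K * (1 + |x| ^ p))
    (hA0 : ∃ ε > (0:ℝ), ∃ R > (0:ℝ),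
      (∀ x : ℝ, R ≤ x → a x / (b x) ^ 2 ≤ -ε) ∧
      (∀ x : ℝ, x ≤ -R → ε ≤ a x / (b x) ^ 2))
    (φ : ℝ → ℝ)
    (hφ : ∀ x : ℝ, φ x = Real.exp (-2 * θ * ∫ y in (0:ℝ)..x, a y / (b y) ^ 2)) :
    (∫⁻ x : ℝ, ENNReal.ofReal (1 / ((b x) ^ 2 * φ x))) < ⊤ :=
  positive_recurrence_condition_general a b θ hθ L hlip K p hp hb hA0 φ hφ
end

section
/- Let θ > 0 and suppose a, b : ℝ → ℝ satisfy the Lipschitz condition (A1) and condition (A4), and that condition (A0) holds: limsup_{|x|→∞} c(x)·sgn(x) < 0 (so that in particular 0 < G_θ < ∞ and the invariant density μ_θ(x) = 1/(G_θ b(x)² φ_θ(x)) is well defined). Then all polynomial moments of the invariant density are finite: for every r ≥ 0, ∫_{-∞}^{+∞} |x|^r μ_θ(x) dx < ∞, i.e. the moment condition (A5) is satisfied. -/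
open MeasureTheory ENNReal
open Real Set

/-! By (A0) the primitive `∫₀ˣ c` of `c = a / b²` lies below `D - ε|x|` for some constant `D`, so
`1 / φ_θ(x) ≤ e^{2θD} e^{-2θε|x|}`, while (A4) makes `1 / b²` grow at most polynomially. Hence
`|x|^r μ_θ(x)` is dominated by `|x|^r (1 + |x|^p)² e^{-2θε|x|}`, which is integrable. -/

theorem integrable_comp_abs_of_integrableOn_Ioi {E : Type*} [NormedAddCommGroup E] {f : ℝ → E}
    (hf : IntegrableOn f (Ioi 0)) : Integrable fun x => f |x| := by
  have hIoi : IntegrableOn (fun x => f |x|) (Ioi 0) :=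
    hf.congr_fun (fun x hx => by rw [abs_of_pos hx]) measurableSet_Ioi
  have hIic : IntegrableOn (fun x => f |x|) (Iic 0) := by
    rw [← (Measure.measurePreserving_neg (volume : Measure ℝ)).integrableOn_comp_preimage
      (Homeomorph.neg ℝ).measurableEmbedding]
    simp only [Function.comp_def, abs_neg, neg_preimage, neg_Iic, neg_zero]
    rwa [integrableOn_Ici_iff_integrableOn_Ioi]
  rw [← integrableOn_univ, ← Iic_union_Ioi (a := (0:ℝ))]
  exact hIic.union hIoi

theorem integrable_rpow_abs_mul_exp_neg_mul_abs {s κ : ℝ} (hs : -1 < s) (hκ : 0 < κ) :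
    Integrable fun x : ℝ => |x| ^ s * exp (-κ * |x|) := by
  have h := integrableOn_rpow_mul_exp_neg_mul_rpow hs one_pos hκ
  simp only [Real.rpow_one] at h
  exact integrable_comp_abs_of_integrableOn_Ioi (f := fun x => x ^ s * exp (-κ * x)) h

theorem integrable_rpow_abs_mul_one_add_rpow_abs_sq_mul_exp {r p κ : ℝ} (hr : 0 ≤ r)
    (hp : 0 ≤ p) (hκ : 0 < κ) :
    Integrable fun x : ℝ => |x| ^ r * (1 + |x| ^ p) ^ 2 * exp (-κ * |x|) := by
  have expand : ∀ x : ℝ, |x| ^ r * (1 + |x| ^ p) ^ 2 * exp (-κ * |x|) =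
      |x| ^ r * exp (-κ * |x|) + 2 * (|x| ^ (r + p) * exp (-κ * |x|))
        + |x| ^ (r + p + p) * exp (-κ * |x|) := by
    intro x
    rw [rpow_add_of_nonneg (abs_nonneg x) (add_nonneg hr hp) hp,
      rpow_add_of_nonneg (abs_nonneg x) hr hp]
    ring
  simp only [expand]
  have hint : ∀ s : ℝ, 0 ≤ s → Integrable fun x : ℝ => |x| ^ s * exp (-κ * |x|) :=
    fun s hs => integrable_rpow_abs_mul_exp_neg_mul_abs (by linarith) hκ
  exact ((hint r hr).add ((hint _ (by positivity)).const_mul 2)).add (hint _ (by positivity))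

theorem exists_integral_le_sub_mul_abs {f : ℝ → ℝ} (hf : ∀ u v, IntervalIntegrable f volume u v)
    {ε R : ℝ} (hε : 0 ≤ ε) (hR : 0 ≤ R)
    (h_right : ∀ x, R ≤ x → f x ≤ -ε) (h_left : ∀ x, x ≤ -R → ε ≤ f x) :
    ∃ D, ∀ x, ∫ y in (0:ℝ)..x, f y ≤ D - ε * |x| := by
  set F := fun x => ∫ y in (0:ℝ)..x, f y
  obtain ⟨B, hB⟩ := (isCompact_Icc.image (intervalIntegral.continuous_primitive hf 0)).bddAbove
  have hFB : ∀ y ∈ Icc (-R) R, F y ≤ B := fun y hy => hB (mem_image_of_mem F hy)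
  refine ⟨B + ε * R, fun x => ?_⟩
  rcases le_or_gt R x with hx | hx
  · have hdrift : ∫ y in R..x, f y ≤ ∫ _ in R..x, -ε :=
      intervalIntegral.integral_mono_on hx (hf R x) intervalIntegrable_const
        fun y hy => h_right y hy.1
    rw [intervalIntegral.integral_const, smul_eq_mul] at hdrift
    have := hFB R ⟨by linarith, le_rfl⟩
    rw [← intervalIntegral.integral_add_adjacent_intervals (hf 0 R) (hf R x),
      abs_of_nonneg (by linarith)]
    nlinarith
  rcases le_or_gt x (-R) with hx' | hx'
  · have hdrift : ∫ _ in x..-R, ε ≤ ∫ y in x..-R, f y :=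
      intervalIntegral.integral_mono_on hx' intervalIntegrable_const (hf x (-R))
        fun y hy => h_left y hy.2
    rw [intervalIntegral.integral_const, smul_eq_mul] at hdrift
    have := hFB (-R) ⟨le_rfl, by linarith⟩
    rw [← intervalIntegral.integral_add_adjacent_intervals (hf 0 (-R)) (hf (-R) x),
      intervalIntegral.integral_symm x (-R), abs_of_nonpos (by linarith)]
    nlinarith
  · have := hFB x ⟨hx'.le, hx.le⟩
    nlinarith [abs_le.mpr (⟨hx'.le, hx.le⟩ : -R ≤ x ∧ x ≤ R)]

theorem inv_sq_le_sq_of_abs_inv_le {u v : ℝ} (h : |u|⁻¹ ≤ v) : (u ^ 2)⁻¹ ≤ v ^ 2 := by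
  rw [← sq_abs, ← inv_pow]
  exact pow_le_pow_left₀ (by positivity) h 2

theorem intervalIntegrable_div_sq {a b g : ℝ → ℝ} (ha : Continuous a) (hb : Continuous b)
    (hg : Continuous g) (hbg : ∀ x, |b x|⁻¹ ≤ g x) (u v : ℝ) :
    IntervalIntegrable (fun x => a x / b x ^ 2) volume u v := by
  refine ((by fun_prop : Continuous fun x => a x * g x ^ 2).intervalIntegrable u v).mono_fun
    (ha.measurable.div (hb.measurable.pow_const 2)).aestronglyMeasurable
    (Filter.Eventually.of_forall fun x => ?_)
  simp only [Real.norm_eq_abs, abs_mul, div_eq_mul_inv]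
  gcongr
  exact inv_sq_le_sq_of_abs_inv_le (hbg x)

theorem continuous_of_abs_sub_add_abs_sub_le {a b : ℝ → ℝ} {L : ℝ}
    (h : ∀ x y, |a x - a y| + |b x - b y| ≤ L * |x - y|) : Continuous a ∧ Continuous b :=
  ⟨(LipschitzWith.of_dist_le' (K := L) fun x y => by
      simpa only [Real.dist_eq] using
        (le_add_of_nonneg_right (abs_nonneg _)).trans (h x y)).continuous,
    (LipschitzWith.of_dist_le' (K := L) fun x y => by
      simpa only [Real.dist_eq] using
        (le_add_of_nonneg_left (abs_nonneg _)).trans (h x y)).continuous⟩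

theorem moments_of_invariant_density_finite_general (a b : ℝ → ℝ) (θ : ℝ) (hθ : 0 < θ)
    (L : ℝ)
    (hlip : ∀ x y : ℝ, |a x - a y| + |b x - b y| ≤ L * |x - y|)
    (K p : ℝ) (hp : 0 ≤ p)
    (hb : ∀ x : ℝ, |b x|⁻¹ ≤ K * (1 + |x| ^ p))
    (hA0 : ∃ ε > (0:ℝ), ∃ R > (0:ℝ),
      (∀ x : ℝ, R ≤ x → a x / (b x) ^ 2 ≤ -ε) ∧
      (∀ x : ℝ, x ≤ -R → ε ≤ a x / (b x) ^ 2))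
    (φ : ℝ → ℝ)
    (hφ : ∀ x : ℝ, φ x = Real.exp (-2 * θ * ∫ y in (0:ℝ)..x, a y / (b y) ^ 2))
    (G : ℝ≥0∞) :
    ∀ r : ℝ, 0 ≤ r →
      (∫⁻ x : ℝ, ENNReal.ofReal (|x| ^ r * (1 / (G.toReal * (b x) ^ 2 * φ x)))) < ⊤ := by
  intro r hr
  obtain ⟨ε, hε, R, hR, h_right, h_left⟩ := hA0
  obtain ⟨ha_cont, hb_cont⟩ := continuous_of_abs_sub_add_abs_sub_le hlip
  obtain ⟨D, hD⟩ := exists_integral_le_sub_mul_abs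
    (intervalIntegrable_div_sq ha_cont hb_cont (by fun_prop (disch := exact hp)) hb)
    hε.le hR.le h_right h_left
  set κ := 2 * θ * ε
  have hφ_inv : ∀ x, (φ x)⁻¹ ≤ exp (2 * θ * D) * exp (-κ * |x|) := fun x => by
    rw [hφ x, ← exp_neg, ← exp_add]
    gcongr
    nlinarith [hD x]
  set C := G.toReal⁻¹ * K ^ 2 * exp (2 * θ * D)
  have hbound : ∀ x, |x| ^ r * (1 / (G.toReal * b x ^ 2 * φ x))
      ≤ C * (|x| ^ r * (1 + |x| ^ p) ^ 2 * exp (-κ * |x|)) := fun x => by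
    calc |x| ^ r * (1 / (G.toReal * b x ^ 2 * φ x))
        = G.toReal⁻¹ * (|x| ^ r * ((b x ^ 2)⁻¹ * (φ x)⁻¹)) := by
          rw [one_div, mul_inv, mul_inv]; ring
      _ ≤ G.toReal⁻¹ * (|x| ^ r * ((K * (1 + |x| ^ p)) ^ 2 *
            (exp (2 * θ * D) * exp (-κ * |x|)))) := by
          have : 0 ≤ (φ x)⁻¹ := by rw [hφ x]; positivity
          gcongr
          exacts [inv_sq_le_sq_of_abs_inv_le (hb x), hφ_inv x]
      _ = C * (|x| ^ r * (1 + |x| ^ p) ^ 2 * exp (-κ * |x|)) := by ring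
  calc (∫⁻ x : ℝ, ENNReal.ofReal (|x| ^ r * (1 / (G.toReal * (b x) ^ 2 * φ x))))
      ≤ ∫⁻ x : ℝ, ENNReal.ofReal (C * (|x| ^ r * (1 + |x| ^ p) ^ 2 * exp (-κ * |x|))) :=
        lintegral_mono fun x => ENNReal.ofReal_le_ofReal (hbound x)
    _ < ⊤ := ((integrable_rpow_abs_mul_one_add_rpow_abs_sq_mul_exp hr hp
        (by positivity)).const_mul C).lintegral_lt_top

/-- For `θ > 0`, under (A1), (A4) and condition (A0), all polynomial moments of the
invariant density `μ_θ(x) = 1/(G_θ b(x)² φ_θ(x))` are finite: for every `r ≥ 0`,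
`∫_{-∞}^{+∞} |x|^r μ_θ(x) dx < ∞`, i.e. the moment condition (A5) is satisfied. -/
theorem moments_of_invariant_density_finite (a b : ℝ → ℝ) (θ : ℝ) (hθ : 0 < θ)
    (L : ℝ) (hL : 0 < L)
    (hlip : ∀ x y : ℝ, |a x - a y| + |b x - b y| ≤ L * |x - y|)
    (K p : ℝ) (hK : 0 < K) (hp : 0 ≤ p)
    (hb : ∀ x : ℝ, |b x|⁻¹ ≤ K * (1 + |x| ^ p))
    (hA0 : ∃ ε > (0:ℝ), ∃ R > (0:ℝ),
      (∀ x : ℝ, R ≤ x → a x / (b x) ^ 2 ≤ -ε) ∧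
      (∀ x : ℝ, x ≤ -R → ε ≤ a x / (b x) ^ 2))
    (φ : ℝ → ℝ)
    (hφ : ∀ x : ℝ, φ x = Real.exp (-2 * θ * ∫ y in (0:ℝ)..x, a y / (b y) ^ 2))
    (G : ℝ≥0∞)
    (hG : G = ∫⁻ x : ℝ, ENNReal.ofReal (1 / ((b x) ^ 2 * φ x))) :
    ∀ r : ℝ, 0 ≤ r →
      (∫⁻ x : ℝ, ENNReal.ofReal (|x| ^ r * (1 / (G.toReal * (b x) ^ 2 * φ x)))) < ⊤ :=
  moments_of_invariant_density_finite_general a b θ hθ L hlip K p hp hb hA0 φ hφ G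
end
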